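/- For every integer m ≥ 5, the discrete torus C_m □ C_m (the Cartesian product of the cycle on m vertices with itself) satisfies meg(C_m □ C_m) = 3m. -/

import Mathlib

open SimpleGraph

/-- `S` is a monitoring edge-geodetic set (MEG-set) of `G`: for every edge `e` of `G`
there are `x, y ∈ S` whose distance in `G − e` differs from their distance in `G`
(including the case that they become disconnected in `G − e`). -/
def IsMEGSet {V : Type*} (G : SimpleGraph V) (S : Set V) : Prop :=
  ∀ e ∈ G.edgeSet, ∃ x ∈ S, ∃ y ∈ S,
    ¬ (G.deleteEdges {e}).Reachable x y ∨ (G.deleteEdges {e}).dist x y ≠ G.dist x y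

/-- The monitoring edge-geodetic number: the minimum cardinality of an MEG-set. -/
noncomputable def meg {V : Type*} [Fintype V] (G : SimpleGraph V) : ℕ :=
  sInf {n | ∃ S : Set V, IsMEGSet G S ∧ S.ncard = n}

/-- The strong product `G ⊠ H` of two simple graphs: `(a,b)` adjacent to `(c,d)` iff
`a = c` and `bd ∈ E(H)`, or `b = d` and `ac ∈ E(G)`, or `ac ∈ E(G)` and `bd ∈ E(H)`. -/
def strongProd {α β : Type*} (G : SimpleGraph α) (H : SimpleGraph β) :
    SimpleGraph (α × β) where
  Adj x y := (x.1 = y.1 ∧ H.Adj x.2 y.2) ∨ (x.2 = y.2 ∧ G.Adj x.1 y.1) ∨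
    (G.Adj x.1 y.1 ∧ H.Adj x.2 y.2)
  symm := ⟨fun x y => by
    rintro (⟨h1, h2⟩ | ⟨h1, h2⟩ | ⟨h1, h2⟩)
    · exact Or.inl ⟨h1.symm, h2.symm⟩
    · exact Or.inr (Or.inl ⟨h1.symm, h2.symm⟩)
    · exact Or.inr (Or.inr ⟨h1.symm, h2.symm⟩)⟩
  loopless := ⟨fun x => by
    rintro (⟨_, h⟩ | ⟨_, h⟩ | ⟨h, _⟩)
    · exact H.loopless.irrefl _ h
    · exact G.loopless.irrefl _ h
    · exact G.loopless.irrefl _ h⟩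

infixl:70 " ⊠ " => strongProd

/-!
A pair `x, y` monitors an edge `e` exactly when `e` lies on every geodesic from `x` to `y`.
Distances in `C_m □ C_m` are sums of the cyclic distances of the coordinates, so a geodesic
between two vertices of one row stays in that row, while a pair not contained in row `r` has an
L-shaped geodesic avoiding every edge of row `r`. In `C_m`, the only geodesic between two points
at cyclic distance `< m / 2` is the short arc.

Lower bound: for a vertex `(r, a)`, the row edge antipodal to `a` is monitored only by two
distinct vertices of row `r` different from `(r, a)`, so an MEG-set meets every row in at least
three vertices. Upper bound: the `3m` vertices `(i, j)` with `j - i ∈ {0, p, -p}`,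
`p = ⌈m / 3⌉`, cut every row into three arcs shorter than `m / 2`, and this set is invariant
under `(i, j) ↦ (j, i)`, which exchanges rows and columns.
-/

namespace Fin

variable {m : ℕ}

theorem val_sub_eq_ite (a b : Fin m) :
    (a - b).val = if b.val ≤ a.val then a.val - b.val else m + a.val - b.val := by
  split_ifs with h
  · exact sub_val_of_le h
  · exact coe_sub_iff_lt.mpr (not_le.mp h)

variable [NeZero m]

theorem val_add_one_eq_ite (hm : 2 ≤ m) (a : Fin m) :
    (a + 1).val = if a.val + 1 = m then 0 else a.val + 1 := by
  rw [val_add_eq_ite, val_one', Nat.mod_eq_of_lt hm]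
  have := a.isLt
  split_ifs <;> omega

theorem sym2_self_add_one_inj (hm : 3 ≤ m) {a c : Fin m} :
    s(c, c + 1) = s(a, a + 1) ↔ c = a := by
  refine ⟨fun h => ?_, fun h => h ▸ rfl⟩
  have := a.isLt; have := c.isLt
  simp only [Sym2.eq_iff, Fin.ext_iff, val_add_one_eq_ite (by omega : 2 ≤ m)] at h ⊢
  split_ifs at h <;> omega

end Fin

section Diagonals

variable {A : Type*} [AddCommGroup A]

def diagonals (D : Set A) : Set (A × A) := {v | v.2 - v.1 ∈ D}

theorem ncard_diagonals [Finite A] (D : Set A) :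
    (diagonals D).ncard = Nat.card A * D.ncard := by
  have hinj : Function.Injective fun q : A × A => (q.1, q.1 + q.2) := fun q q' h => by
    obtain ⟨h₁, h₂⟩ := Prod.ext_iff.mp h
    dsimp only at h₁ h₂
    exact Prod.ext h₁ (add_left_cancel (h₁ ▸ h₂))
  have himage : diagonals D = (fun q : A × A => (q.1, q.1 + q.2)) '' (Set.univ ×ˢ D) := by
    ext ⟨a, b⟩
    constructor
    · exact fun h => ⟨(a, b - a), ⟨trivial, h⟩, by simp⟩
    · rintro ⟨⟨a', d⟩, ⟨-, hd⟩, h⟩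
      obtain ⟨rfl, rfl⟩ := Prod.ext_iff.mp h
      simpa [diagonals] using hd
  rw [himage, Set.ncard_image_of_injective _ hinj, Set.ncard_prod, Set.ncard_univ]

theorem swap_mem_diagonals {D : Set A} (hD : ∀ d ∈ D, -d ∈ D) {v : A × A}
    (hv : v ∈ diagonals D) : v.swap ∈ diagonals D := by
  simpa [diagonals] using hD _ hv

end Diagonals

namespace SimpleGraph

variable {V V' : Type*} {G : SimpleGraph V} {G' : SimpleGraph V'} {e : Sym2 V} {x y : V}

def OnAllGeodesics (G : SimpleGraph V) (e : Sym2 V) (x y : V) : Prop :=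
  ∀ W : G.Walk x y, W.length = G.dist x y → e ∈ W.edges

theorem onAllGeodesics_iff_deleteEdges :
    G.OnAllGeodesics e x y ↔
      ¬ (G.deleteEdges {e}).Reachable x y ∨ (G.deleteEdges {e}).dist x y ≠ G.dist x y := by
  constructor
  · intro hall
    by_contra! ⟨hreach, hdist⟩
    obtain ⟨W, hW⟩ := hreach.exists_walk_length_eq_dist
    have hmem := hall (W.mapLe (G.deleteEdges_le {e})) (by simp [hW, hdist])
    rw [Walk.edges_mapLe_eq_edges] at hmem
    simpa using W.edges_subset_edgeSet hmem
  · rintro hmon W hW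
    by_contra he
    have hsub : ∀ f ∈ W.edges, f ∈ (G.deleteEdges {e}).edgeSet := fun f hf => by
      simpa [edgeSet_deleteEdges, W.edges_subset_edgeSet hf] using ne_of_mem_of_not_mem hf he
    let W' := W.transfer _ hsub
    refine hmon.elim (fun hr => hr ⟨W'⟩) fun hd => hd (le_antisymm ?_ ?_)
    · simpa [W', hW] using dist_le W'
    · exact Reachable.dist_anti (G.deleteEdges_le {e}) ⟨W'⟩

theorem isMEGSet_iff_onAllGeodesics {S : Set V} :
    IsMEGSet G S ↔ ∀ e ∈ G.edgeSet, ∃ x ∈ S, ∃ y ∈ S, G.OnAllGeodesics e x y := by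
  simp only [IsMEGSet, onAllGeodesics_iff_deleteEdges]

theorem onAllGeodesics_comm : G.OnAllGeodesics e x y ↔ G.OnAllGeodesics e y x := by
  suffices ∀ {x y}, G.OnAllGeodesics e x y → G.OnAllGeodesics e y x from ⟨this, this⟩
  intro x y h W hW
  simpa using h W.reverse (by rw [Walk.length_reverse, hW, dist_comm])

theorem not_onAllGeodesics_self : ¬ G.OnAllGeodesics e x x := fun h => by
  simpa using h Walk.nil (by simp)

theorem Iso.dist_eq (φ : G ≃g G') (x y : V) : G'.dist (φ x) (φ y) = G.dist x y := by
  rw [dist_eq_sInf, dist_eq_sInf]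
  congr 1
  ext n
  constructor
  · rintro ⟨W, rfl⟩
    exact ⟨(W.map φ.symm.toHom).copy (by simp) (by simp), by simp⟩
  · rintro ⟨W, rfl⟩
    exact ⟨W.map φ.toHom, by simp⟩

theorem OnAllGeodesics.map_iso (φ : G ≃g G') (h : G.OnAllGeodesics e x y) :
    G'.OnAllGeodesics (e.map φ) (φ x) (φ y) := by
  intro W hW
  have hmem := h ((W.map φ.symm.toHom).copy (by simp) (by simp)) (by simp [hW, φ.dist_eq])
  simp only [Walk.edges_copy, Walk.edges_map, List.mem_map] at hmem
  obtain ⟨f, hf, rfl⟩ := hmem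
  simpa [Sym2.map_map] using hf

theorem meg_eq_ncard [Fintype V] {S : Set V} (hS : IsMEGSet G S)
    (hmin : ∀ T, IsMEGSet G T → S.ncard ≤ T.ncard) : meg G = S.ncard := by
  refine le_antisymm (Nat.sInf_le ⟨S, hS, rfl⟩) ?_
  obtain ⟨T, hT, hcard⟩ := Nat.sInf_mem
    (⟨S.ncard, S, hS, rfl⟩ : {n | ∃ T, IsMEGSet G T ∧ T.ncard = n}.Nonempty)
  exact (hmin T hT).trans_eq hcard

section BoxProd

variable {α β : Type*} {G : SimpleGraph α} {H : SimpleGraph β}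

theorem dist_boxProd (hG : G.Preconnected) (hH : H.Preconnected) (x y : α × β) :
    (G □ H).dist x y = G.dist x.1 y.1 + H.dist x.2 y.2 := by
  rw [dist, edist_boxProd, ← (hG x.1 y.1).coe_dist_eq_edist, ← (hH x.2 y.2).coe_dist_eq_edist]
  rfl

theorem Walk.length_boxProdLeft {a₁ a₂ : α} (W : G.Walk a₁ a₂) (b : β) :
    (W.boxProdLeft H b).length = W.length :=
  Walk.length_map _ _

theorem Walk.length_boxProdRight {b₁ b₂ : β} (W : H.Walk b₁ b₂) (a : α) :
    (W.boxProdRight G a).length = W.length :=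
  Walk.length_map _ _

theorem Walk.edges_boxProdLeft {a₁ a₂ : α} (W : G.Walk a₁ a₂) (b : β) :
    (W.boxProdLeft H b).edges = W.edges.map (Sym2.map (·, b)) :=
  Walk.edges_map _ _

theorem Walk.edges_boxProdRight {b₁ b₂ : β} (W : H.Walk b₁ b₂) (a : α) :
    (W.boxProdRight G a).edges = W.edges.map (Sym2.map (a, ·)) :=
  Walk.edges_map _ _

theorem Walk.map_mem_edges_of_length_ofBoxProdLeft_eq_zero [DecidableEq α] [DecidableRel H.Adj]
    [DecidableEq β] [DecidableRel G.Adj] {x y : α × β} (W : (G □ H).Walk x y)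
    (hW : W.ofBoxProdLeft.length = 0) {f : Sym2 β} (hf : f ∈ W.ofBoxProdRight.edges) :
    f.map (x.1, ·) ∈ W.edges := by
  induction W with
  | nil => simp [Walk.ofBoxProdRight] at hf
  | @cons x z y h W ih =>
    obtain ⟨x1, x2⟩ := x
    obtain ⟨z1, z2⟩ := z
    unfold Walk.ofBoxProdLeft at hW
    unfold Walk.ofBoxProdRight at hf
    by_cases hG : G.Adj x1 z1 ∧ x2 = z2
    · simp [hG, Or.by_cases] at hW
    · obtain ⟨hH, rfl⟩ : H.Adj x2 z2 ∧ x1 = z1 := by simpa [hG] using h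
      simp only [hH, Or.by_cases, SimpleGraph.irrefl, false_and, and_self, ↓reduceDIte,
        Walk.edges_cons, List.mem_cons] at hW hf
      rcases hf with rfl | hf
      · simp
      · exact List.mem_cons_of_mem _ (ih hW hf)

theorem OnAllGeodesics.boxProdRight (hG : G.Preconnected) (hH : H.Preconnected) {e : Sym2 β}
    {a b : β} (h : H.OnAllGeodesics e a b) (r : α) :
    (G □ H).OnAllGeodesics (e.map (r, ·)) (r, a) (r, b) := by
  classical
  intro W hW
  simp only [dist_boxProd hG hH, dist_self, zero_add] at hW
  have hsplit := W.length_boxProd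
  have hright : H.dist a b ≤ W.ofBoxProdRight.length := dist_le _
  exact W.map_mem_edges_of_length_ofBoxProdLeft_eq_zero (by omega) (h _ (by omega))

theorem OnAllGeodesics.of_boxProdRight (hG : G.Preconnected) (hH : H.Preconnected) {c d : β}
    (hcd : c ≠ d) {r : α} {x y : α × β}
    (h : (G □ H).OnAllGeodesics (s(c, d).map (r, ·)) x y) :
    x.1 = r ∧ H.OnAllGeodesics s(c, d) x.2 y.2 := by
  obtain ⟨WG, hWG⟩ := (hG x.1 y.1).exists_walk_length_eq_dist
  have hLshaped : ∀ WH : H.Walk x.2 y.2, WH.length = H.dist x.2 y.2 →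
      x.1 = r ∧ s(c, d) ∈ WH.edges := by
    intro WH hWH
    have hmem := h (((WH.boxProdRight G x.1).append (WG.boxProdLeft H y.2)).copy rfl rfl) (by
      rw [Walk.length_copy, Walk.length_append, Walk.length_boxProdRight,
        Walk.length_boxProdLeft, dist_boxProd hG hH, hWG, hWH, add_comm])
    simp only [Walk.edges_copy, Walk.edges_append, Walk.edges_boxProdRight,
      Walk.edges_boxProdLeft, List.mem_append, List.mem_map] at hmem
    rcases hmem with ⟨f, hf, hfe⟩ | ⟨f, hf, hfe⟩ <;> induction f using Sym2.ind <;>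
      simp only [Sym2.map_mk, Sym2.eq_iff, Prod.mk.injEq] at hfe
    · rcases hfe with ⟨⟨hr, rfl⟩, -, rfl⟩ | ⟨⟨hr, rfl⟩, -, rfl⟩
      · exact ⟨hr, hf⟩
      · exact ⟨hr, Sym2.eq_swap ▸ hf⟩
    · exact absurd (by grind) hcd
  obtain ⟨WH, hWH⟩ := (hH x.2 y.2).exists_walk_length_eq_dist
  exact ⟨(hLshaped WH hWH).1, fun W hW => (hLshaped W hW).2⟩

theorem isMEGSet_boxProd_self {S : Set (α × α)} (hswap : ∀ v ∈ S, v.swap ∈ S)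
    (hfiber : ∀ r, ∀ e ∈ G.edgeSet, ∃ x ∈ S, ∃ y ∈ S,
      (G □ G).OnAllGeodesics (e.map (r, ·)) x y) :
    IsMEGSet (G □ G) S := by
  rw [isMEGSet_iff_onAllGeodesics]
  intro e he
  induction e using Sym2.ind with | _ u v => ?_
  obtain ⟨u₁, u₂⟩ := u
  obtain ⟨v₁, v₂⟩ := v
  rw [mem_edgeSet, boxProd_adj] at he
  dsimp only at he
  rcases he with ⟨hG, rfl⟩ | ⟨hG, rfl⟩
  · obtain ⟨x, hx, y, hy, h⟩ := hfiber u₂ s(u₁, v₁) hG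
    refine ⟨x.swap, hswap x hx, y.swap, hswap y hy, ?_⟩
    simpa using h.map_iso (boxProdComm G G)
  · obtain ⟨x, hx, y, hy, h⟩ := hfiber u₁ s(u₂, v₂) hG
    exact ⟨x, hx, y, hy, by simpa using h⟩

end BoxProd

section Cycle

variable {m : ℕ} [NeZero m]

theorem cycleGraph_adj_add_one (hm : 2 ≤ m) (a : Fin m) : (cycleGraph m).Adj a (a + 1) := by
  rw [cycleGraph_adj']
  right
  have := a.isLt
  rw [Fin.val_sub_eq_ite, Fin.val_add_one_eq_ite hm]
  split_ifs <;> omega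

theorem cycleGraph_exists_eq_mk_add_one (hm : 2 ≤ m) {a b : Fin m}
    (h : (cycleGraph m).Adj a b) : ∃ c, s(a, b) = s(c, c + 1) := by
  rw [cycleGraph_adj'] at h
  have := a.isLt; have := b.isLt
  rcases h with h | h
  · refine ⟨b, Sym2.eq_swap.trans (congrArg _ ?_)⟩
    simp only [Fin.ext_iff, Fin.val_sub_eq_ite, Fin.val_add_one_eq_ite hm] at h ⊢
    split_ifs at h ⊢ <;> omega
  · refine ⟨a, congrArg _ ?_⟩
    simp only [Fin.ext_iff, Fin.val_sub_eq_ite, Fin.val_add_one_eq_ite hm] at h ⊢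
    split_ifs at h ⊢ <;> omega

theorem cycleGraph_min_sub_val_le_length {a b : Fin m} (W : (cycleGraph m).Walk a b) :
    min (b - a).val (a - b).val ≤ W.length := by
  induction W with
  | nil => simp
  | @cons u v b h W ih =>
    rw [cycleGraph_adj'] at h
    have := u.isLt; have := v.isLt; have := b.isLt
    rw [Walk.length_cons]
    simp only [Fin.val_sub_eq_ite] at h ih ⊢
    split_ifs at h ih ⊢ <;> omega

theorem cycleGraph_exists_walk_length_eq_sub_val (hm : 3 ≤ m) (a b : Fin m) :
    ∃ W : (cycleGraph m).Walk a b, W.length = (b - a).val ∧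
      ∀ c, s(c, c + 1) ∈ W.edges → (c - a).val < (b - a).val := by
  induction hk : (b - a).val generalizing a with
  | zero =>
    obtain rfl : a = b := by simpa [sub_eq_zero, eq_comm] using hk
    exact ⟨Walk.nil, rfl, by simp⟩
  | succ k ih =>
    have hk' : (b - (a + 1)).val = k := by
      have := a.isLt; have := b.isLt
      simp only [Fin.val_sub_eq_ite, Fin.val_add_one_eq_ite (by omega : 2 ≤ m)] at hk ⊢
      split_ifs at hk ⊢ <;> omega
    obtain ⟨W, hW, hedges⟩ := ih (a + 1) hk'
    refine ⟨Walk.cons (cycleGraph_adj_add_one (by omega) a) W, by simp [hW], fun c hc => ?_⟩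
    rw [Walk.edges_cons, List.mem_cons, Fin.sym2_self_add_one_inj hm] at hc
    rcases hc with rfl | hc
    · simp
    · have hlt := hedges c hc
      have := a.isLt; have := b.isLt; have := c.isLt
      simp only [Fin.val_sub_eq_ite, Fin.val_add_one_eq_ite (by omega : 2 ≤ m)] at hk hlt ⊢
      split_ifs at hk hlt ⊢ <;> omega

theorem dist_cycleGraph (hm : 3 ≤ m) (a b : Fin m) :
    (cycleGraph m).dist a b = min (b - a).val (a - b).val := by
  refine le_antisymm ?_ ?_
  · obtain ⟨W₁, hW₁, -⟩ := cycleGraph_exists_walk_length_eq_sub_val hm a b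
    obtain ⟨W₂, hW₂, -⟩ := cycleGraph_exists_walk_length_eq_sub_val hm b a
    exact le_min (hW₁ ▸ dist_le W₁) (hW₂ ▸ dist_comm (G := cycleGraph m) ▸ dist_le W₂)
  · obtain ⟨W, hW⟩ := (cycleGraph_preconnected a b).exists_walk_length_eq_dist
    exact hW ▸ cycleGraph_min_sub_val_le_length W

theorem cycleGraph_mem_edges_of_length_le (hm : 3 ≤ m) {a b c : Fin m}
    (W : (cycleGraph m).Walk a b) (hW : W.length ≤ (b - a).val) (h2 : 2 * (b - a).val < m)
    (hc : (c - a).val < (b - a).val) : s(c, c + 1) ∈ W.edges := by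
  induction W with
  | nil => simp at hc
  | @cons a z b h W ih =>
    have hback := cycleGraph_min_sub_val_le_length W
    rw [Walk.length_cons] at hW
    rw [cycleGraph_adj'] at h
    have := a.isLt; have := b.isLt; have := c.isLt; have := z.isLt
    have hz : z = a + 1 := by
      simp only [Fin.ext_iff, Fin.val_sub_eq_ite, Fin.val_add_one_eq_ite (by omega : 2 ≤ m)]
        at h hback hW h2 ⊢
      split_ifs at h hback hW h2 ⊢ <;> omega
    subst hz
    rw [Walk.edges_cons, List.mem_cons, Fin.sym2_self_add_one_inj hm]
    by_cases hca : c = a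
    · exact Or.inl hca
    · refine Or.inr (ih ?_ ?_ ?_) <;>
      · simp only [Fin.ext_iff, Fin.val_sub_eq_ite, Fin.val_add_one_eq_ite (by omega : 2 ≤ m)]
          at hca hW h2 hc ⊢
        split_ifs at hca hW h2 hc ⊢ <;> omega

theorem onAllGeodesics_cycleGraph (hm : 3 ≤ m) {a b c : Fin m} (h2 : 2 * (b - a).val < m)
    (hc : (c - a).val < (b - a).val) : (cycleGraph m).OnAllGeodesics s(c, c + 1) a b :=
  fun W hW => cycleGraph_mem_edges_of_length_le hm W
    (by rw [hW, dist_cycleGraph hm]; exact min_le_left _ _) h2 hc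

theorem not_onAllGeodesics_cycleGraph (hm : 3 ≤ m) {a b c : Fin m} (h2 : 2 * (b - a).val ≤ m)
    (hc : (b - a).val ≤ (c - a).val) : ¬ (cycleGraph m).OnAllGeodesics s(c, c + 1) a b := by
  obtain ⟨W, hW, hedges⟩ := cycleGraph_exists_walk_length_eq_sub_val hm a b
  have hgeod : W.length = (cycleGraph m).dist a b := by
    have := a.isLt; have := b.isLt
    rw [hW, dist_cycleGraph hm]
    simp only [Fin.val_sub_eq_ite] at h2 ⊢
    split_ifs at h2 ⊢ <;> omega
  exact fun h => absurd (hedges c (h W hgeod)) (not_lt.mpr hc)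

theorem not_onAllGeodesics_cycleGraph_of_sub_val_eq_half (hm : 3 ≤ m) {a c : Fin m}
    (hc : (c - a).val = m / 2) (b : Fin m) :
    ¬ (cycleGraph m).OnAllGeodesics s(c, c + 1) a b := by
  have := a.isLt; have := b.isLt; have := c.isLt
  by_cases h2 : 2 * (b - a).val ≤ m
  · exact not_onAllGeodesics_cycleGraph hm h2 (by omega)
  · rw [onAllGeodesics_comm]
    refine not_onAllGeodesics_cycleGraph hm ?_ ?_ <;>
    · simp only [Fin.val_sub_eq_ite] at hc h2 ⊢
      split_ifs at hc h2 ⊢ <;> omega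

end Cycle

end SimpleGraph

section Torus

variable {m : ℕ} [NeZero m]

theorem exists_short_arc_containing {p : Fin m} (h₁ : 2 * p.val < m) (h₂ : m < 4 * p.val)
    (k : Fin m) : ∃ d₁ ∈ ({0, p, -p} : Set (Fin m)), ∃ d₂ ∈ ({0, p, -p} : Set (Fin m)),
      2 * (d₂ - d₁).val < m ∧ (k - d₁).val < (d₂ - d₁).val := by
  have hneg : (-p).val = m - p.val := by
    rw [Fin.val_neg', Nat.mod_eq_of_lt (by omega)]
  have := k.isLt
  rcases lt_or_ge k.val p.val with hk | hk
  · refine ⟨0, by simp, p, by simp, ?_⟩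
    simp only [sub_zero]
    omega
  rcases lt_or_ge k.val (m - p.val) with hk' | hk'
  · refine ⟨p, by simp, -p, by simp, ?_⟩
    simp only [Fin.val_sub_eq_ite, hneg]
    split_ifs <;> omega
  · refine ⟨-p, by simp, 0, by simp, ?_⟩
    simp only [Fin.val_sub_eq_ite, hneg, Fin.val_zero]
    split_ifs <;> omega

theorem ncard_zero_self_neg {p : Fin m} (h₀ : 0 < p.val) (h₁ : 2 * p.val < m) :
    ({0, p, -p} : Set (Fin m)).ncard = 3 := by
  have hneg : (-p).val = m - p.val := by
    rw [Fin.val_neg', Nat.mod_eq_of_lt (by omega)]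
  refine Set.ncard_eq_three.mpr ⟨0, p, -p, ?_, ?_, ?_, rfl⟩ <;>
    simp only [ne_eq, Fin.ext_iff, hneg, Fin.val_zero] <;> omega

theorem exists_onAllGeodesics_diagonals (hm : 3 ≤ m) {p : Fin m} (h₁ : 2 * p.val < m)
    (h₂ : m < 4 * p.val) (r : Fin m) {e : Sym2 (Fin m)} (he : e ∈ (cycleGraph m).edgeSet) :
    ∃ x ∈ diagonals {0, p, -p}, ∃ y ∈ diagonals {0, p, -p},
      (cycleGraph m □ cycleGraph m).OnAllGeodesics (e.map (r, ·)) x y := by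
  induction e using Sym2.ind with | _ a b => ?_
  obtain ⟨c, hc⟩ := cycleGraph_exists_eq_mk_add_one (by omega) he
  obtain ⟨d₁, hd₁, d₂, hd₂, hshort, hgap⟩ := exists_short_arc_containing h₁ h₂ (c - r)
  refine ⟨(r, r + d₁), by simpa [diagonals] using hd₁, (r, r + d₂), by simpa [diagonals] using hd₂,
    hc ▸ OnAllGeodesics.boxProdRight cycleGraph_preconnected cycleGraph_preconnected
      (onAllGeodesics_cycleGraph hm ?_ ?_) r⟩
  · rwa [add_sub_add_left_eq_sub]
  · rwa [add_sub_add_left_eq_sub, sub_add_eq_sub_sub]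

theorem isMEGSet_diagonals (hm : 3 ≤ m) {p : Fin m} (h₁ : 2 * p.val < m) (h₂ : m < 4 * p.val) :
    IsMEGSet (cycleGraph m □ cycleGraph m) (diagonals {0, p, -p}) :=
  isMEGSet_boxProd_self
    (fun _ => swap_mem_diagonals (by rintro d (rfl | rfl | rfl) <;> simp))
    (fun r _ he => exists_onAllGeodesics_diagonals hm h₁ h₂ r he)

theorem exists_pair_mem_row_ne (hm : 3 ≤ m) {S : Set (Fin m × Fin m)}
    (hS : IsMEGSet (cycleGraph m □ cycleGraph m) S) (r a : Fin m) :
    ∃ x ∈ S, ∃ y ∈ S, x.1 = r ∧ y.1 = r ∧ x.2 ≠ a ∧ y.2 ≠ a ∧ x ≠ y := by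
  set c := a + Fin.ofNat m (m / 2)
  have hc : (c - a).val = m / 2 := by
    simp [c, Nat.mod_eq_of_lt (by omega : m / 2 < m)]
  have hadj := cycleGraph_adj_add_one (by omega) c
  obtain ⟨x, hx, y, hy, h⟩ := isMEGSet_iff_onAllGeodesics.mp hS (s(c, c + 1).map (r, ·))
    (by simpa using hadj)
  obtain ⟨hxr, hxy⟩ := h.of_boxProdRight cycleGraph_preconnected cycleGraph_preconnected hadj.ne
  obtain ⟨hyr, -⟩ := (onAllGeodesics_comm.mp h).of_boxProdRight cycleGraph_preconnected
    cycleGraph_preconnected hadj.ne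
  refine ⟨x, hx, y, hy, hxr, hyr, ?_, ?_, ?_⟩
  · rintro rfl
    exact not_onAllGeodesics_cycleGraph_of_sub_val_eq_half hm hc _ hxy
  · rintro rfl
    exact not_onAllGeodesics_cycleGraph_of_sub_val_eq_half hm hc _ (onAllGeodesics_comm.mp hxy)
  · rintro rfl
    exact not_onAllGeodesics_self hxy

theorem three_mul_le_ncard_of_isMEGSet (hm : 3 ≤ m) {S : Set (Fin m × Fin m)}
    (hS : IsMEGSet (cycleGraph m □ cycleGraph m) S) : 3 * m ≤ S.ncard := by
  classical
  rw [Set.ncard_eq_toFinset_card', Finset.card_eq_sum_card_fiberwise (f := Prod.fst)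
    (t := Finset.univ) (by simp)]
  calc 3 * m = ∑ _r : Fin m, 3 := by simp [mul_comm]
    _ ≤ _ := Finset.sum_le_sum fun r _ => ?_
  obtain ⟨x, hx, -, -, hxr, -⟩ := exists_pair_mem_row_ne hm hS r 0
  obtain ⟨y, hy, z, hz, hyr, hzr, hyx, hzx, hyz⟩ := exists_pair_mem_row_ne hm hS r x.2
  refine Finset.two_lt_card.mpr ⟨x, by simp [hx, hxr], y, by simp [hy, hyr], z, by simp [hz, hzr],
    ?_, ?_, hyz⟩
  · rintro rfl
    exact hyx rfl
  · rintro rfl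
    exact hzx rfl

end Torus

theorem meg_torus (m : ℕ) (hm : 5 ≤ m) :
    meg (cycleGraph m □ cycleGraph m) = 3 * m := by
  have : NeZero m := ⟨by omega⟩
  set p := Fin.ofNat m ((m + 2) / 3)
  have hp : p.val = (m + 2) / 3 := Nat.mod_eq_of_lt (by omega)
  have hcard : (diagonals ({0, p, -p} : Set (Fin m))).ncard = 3 * m := by
    rw [ncard_diagonals, Nat.card_eq_fintype_card, Fintype.card_fin,
      ncard_zero_self_neg (by omega) (by omega), mul_comm]
  rw [← hcard]
  exact meg_eq_ncard (isMEGSet_diagonals (by omega) (by omega) (by omega))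
    fun T hT => hcard ▸ three_mul_le_ncard_of_isMEGSet (by omega) hT
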